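/- Assume R_c > 1 and let θ ∈ (0,1). Set E* = λ(R_c − 1)/((c + d)R_c). Then for every solution of the model there exists a sequence of times t_n with t_n → ∞ such that E(t_n) > θE* for all n ≥ 1. -/

import Mathlib

/-!
Suppose instead that `E ≤ θ E*` from some time on. Then `I` and `A`, driven linearly by `E`,
eventually fall below anything larger than `p c θ E* / B₁` and `(1 - p) c θ E* / B₂`, so the
force of infection `a E + I + b A` stays below a level `F` with `β F < λ (R_c - 1)`. Below such
a level the susceptible fraction `S / N` is pushed above some `σ > 1 / R_c`, and with `S / N ≥ σ`
the infected subsystem is supercritical: a weighted sum `V = E + α I + γ A` satisfies `V' ≥ κ V`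
for some `κ > 0` and hence grows without bound, although `E`, `I` and `A` are bounded.
-/

open Real Filter Set Topology

section DifferentialInequalities

variable {y y' : ℝ → ℝ} {μ K T : ℝ}

theorem le_add_mul_exp_of_hasDerivAt_le (hy : ∀ t, T ≤ t → HasDerivAt y (y' t) t)
    (hle : ∀ t, T ≤ t → y' t ≤ μ * (K - y t)) :
    ∀ t, T ≤ t → y t ≤ K + (y T - K) * exp (-μ * (t - T)) := by
  have hz : ∀ t, T ≤ t → HasDerivAt (fun s => (y s - K) * exp (μ * s))
      ((y' t - μ * (K - y t)) * exp (μ * t)) t := fun t ht =>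
    (((hy t ht).sub_const K).mul ((hasDerivAt_id' t).const_mul μ).exp).congr_deriv (by ring)
  have hanti : AntitoneOn (fun s => (y s - K) * exp (μ * s)) (Ici T) := by
    refine antitoneOn_of_hasDerivWithinAt_nonpos
      (f' := fun t => (y' t - μ * (K - y t)) * exp (μ * t)) (convex_Ici T)
      (fun t ht => (hz t ht).continuousAt.continuousWithinAt) (fun t ht => ?_) fun t ht => ?_
    all_goals rw [interior_Ici] at ht
    · exact (hz t ht.le).hasDerivWithinAt
    · exact mul_nonpos_of_nonpos_of_nonneg (by linarith [hle t ht.le]) (exp_pos _).le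
  intro t ht
  have key := hanti self_mem_Ici ht ht
  have hexp : exp (-μ * (t - T)) = exp (μ * T) / exp (μ * t) := by
    rw [← exp_sub]; ring_nf
  rw [hexp, ← mul_div_assoc, ← sub_le_iff_le_add', le_div_iff₀ (exp_pos _)]
  exact key

theorem add_mul_exp_le_of_le_hasDerivAt (hy : ∀ t, T ≤ t → HasDerivAt y (y' t) t)
    (hge : ∀ t, T ≤ t → μ * (K - y t) ≤ y' t) :
    ∀ t, T ≤ t → K + (y T - K) * exp (-μ * (t - T)) ≤ y t := by
  intro t ht
  have := le_add_mul_exp_of_hasDerivAt_le (y := -y) (y' := -y') (μ := μ) (K := -K)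
    (fun t ht => (hy t ht).neg) (fun t ht => by simp only [Pi.neg_apply]; linarith [hge t ht]) t ht
  simp only [Pi.neg_apply] at this
  linarith

theorem eventually_le_add_of_hasDerivAt_le_mul_sub {ε : ℝ} (hμ : 0 < μ) (hε : 0 < ε)
    (hy : ∀ᶠ t in atTop, HasDerivAt y (y' t) t) (hle : ∀ᶠ t in atTop, y' t ≤ μ * (K - y t)) :
    ∀ᶠ t in atTop, y t ≤ K + ε := by
  obtain ⟨T, hT⟩ := (hy.and hle).exists_forall_of_atTop
  have hdecay : Tendsto (fun t => (y T - K) * exp (-μ * (t - T))) atTop (𝓝 0) := by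
    simpa [sub_eq_add_neg] using ((tendsto_exp_atBot.comp ((tendsto_atTop_add_const_right _ (-T)
      tendsto_id).const_mul_atTop_of_neg (neg_neg_iff_pos.mpr hμ))).const_mul (y T - K))
  filter_upwards [eventually_ge_atTop T, hdecay.eventually (eventually_le_nhds hε)] with t ht htail
  linarith [le_add_mul_exp_of_hasDerivAt_le (fun t ht => (hT t ht).1) (fun t ht => (hT t ht).2)
    t ht]

theorem eventually_le_of_hasDerivAt_eq_mul_sub_mul {u : ℝ → ℝ} {k B M ε : ℝ} (hk : 0 ≤ k)
    (hB : 0 < B) (hε : 0 < ε) (hy : ∀ᶠ t in atTop, HasDerivAt y (k * u t - B * y t) t)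
    (hu : ∀ᶠ t in atTop, u t ≤ M) :
    ∀ᶠ t in atTop, y t ≤ k * M / B + ε := by
  refine eventually_le_add_of_hasDerivAt_le_mul_sub hB hε hy (hu.mono fun t ht => ?_)
  rw [mul_sub, mul_div_cancel₀ _ hB.ne']
  linarith [mul_le_mul_of_nonneg_left ht hk]

theorem tendsto_atTop_of_hasDerivAt_ge_mul {κ : ℝ} (hκ : 0 < κ)
    (hy : ∀ᶠ t in atTop, HasDerivAt y (y' t) t) (hge : ∀ᶠ t in atTop, κ * y t ≤ y' t)
    (hpos : ∀ᶠ t in atTop, 0 < y t) : Tendsto y atTop atTop := by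
  obtain ⟨T, hT⟩ := ((hy.and hge).and hpos).exists_forall_of_atTop
  have hgrowth := add_mul_exp_le_of_le_hasDerivAt (μ := -κ) (K := 0) (fun t ht => (hT t ht).1.1)
    (fun t ht => by linarith [(hT t ht).1.2])
  refine tendsto_atTop_mono' _ ((eventually_ge_atTop T).mono fun t ht => ?_)
    (((tendsto_exp_atTop.comp ((tendsto_atTop_add_const_right _ (-T) tendsto_id).const_mul_atTop
      hκ)).const_mul_atTop (hT T le_rfl).2))
  simpa [sub_eq_add_neg] using hgrowth t ht

theorem eventually_le_of_hasDerivAt_ge_below {σ ρ : ℝ} (hρ : 0 < ρ)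
    (hy : ∀ᶠ t in atTop, HasDerivAt y (y' t) t) (hge : ∀ᶠ t in atTop, y t ≤ σ → ρ ≤ y' t) :
    ∀ᶠ t in atTop, σ ≤ y t := by
  obtain ⟨T, hT⟩ := (hy.and hge).exists_forall_of_atTop
  have hcont : ∀ a b, T ≤ a → ContinuousOn y (Icc a b) := fun a b ha t ht =>
    (hT t (ha.trans ht.1)).1.continuousAt.continuousWithinAt
  -- While below `σ`, `y` grows at rate at least `ρ`, so it cannot stay below `σ` forever.
  obtain ⟨t₀, hTt₀, hσt₀⟩ : ∃ t₀, T ≤ t₀ ∧ σ ≤ y t₀ := by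
    by_contra! hbelow
    set t := T + (σ - y T) / ρ + 1
    have hTt : T ≤ t := by
      have := div_nonneg (sub_nonneg.mpr (hbelow T le_rfl).le) hρ.le
      linarith
    have hlin := image_le_of_deriv_right_le_deriv_boundary (f := fun s => y T + ρ * (s - T))
      (f' := fun _ => ρ) (B' := y') (a := T) (b := t)
      (((continuous_const.mul (continuous_id.sub continuous_const))).const_add _).continuousOn
      (fun s _ => ((((hasDerivAt_id' s).sub_const T).const_mul ρ).const_add
        (y T)).hasDerivWithinAt.congr_deriv (by ring))
      (by simp) (hcont T t le_rfl) (fun s hs => (hT s hs.1).1.hasDerivWithinAt)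
      (fun s hs => (hT s hs.1).2 (hbelow s hs.1).le) ⟨hTt, le_rfl⟩
    have : ρ * (t - T) = σ - y T + ρ := by
      simp only [t]; field_simp; ring
    linarith [hbelow t hTt]
  -- Once at `σ`, `y` has positive derivative at every return to `σ`, so it stays above.
  filter_upwards [eventually_ge_atTop t₀] with t ht
  exact image_le_of_deriv_right_lt_deriv_boundary' (f := fun _ => σ) (f' := fun _ => 0)
    continuousOn_const (fun s _ => hasDerivWithinAt_const _ _ _) hσt₀ (hcont t₀ t hTt₀)
    (fun s hs => (hT s (hTt₀.trans hs.1)).1.hasDerivWithinAt)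
    (fun s hs hσs => hρ.trans_le ((hT s (hTt₀.trans hs.1)).2 hσs.symm.le)) ⟨ht, le_rfl⟩

theorem exists_pos_lt_of_continuousAt {g : ℝ → ℝ} (hg : ContinuousAt g 0) (hg0 : 0 < g 0) :
    ∃ κ > 0, κ < g κ := by
  have hsub : ContinuousAt (fun κ => g κ - κ) 0 := hg.sub continuousAt_id
  have hev : ∀ᶠ κ in 𝓝[>] 0, 0 < g κ - κ :=
    nhdsWithin_le_nhds (hsub.eventually (eventually_gt_nhds (by simpa using hg0)))
  obtain ⟨κ, hκ, hlt⟩ := ((eventually_mem_nhdsWithin (a := (0 : ℝ)) (s := Ioi 0)).and hev).exists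
  exact ⟨κ, hκ, by linarith⟩

end DifferentialInequalities

theorem exists_one_lt_mul_and_mul_lt {X lam Rc : ℝ} (hX : 0 < X) (hRc : 0 < Rc)
    (hlt : X < lam * Rc) : ∃ σ, 0 < σ ∧ 1 < σ * Rc ∧ X * σ < lam := by
  have hlam : 0 < lam := pos_of_mul_pos_left (hX.trans hlt) hRc.le
  have hgap : 1 / Rc < lam / X := by rw [div_lt_div_iff₀ hRc hX]; linarith
  refine ⟨(1 / Rc + lam / X) / 2, by positivity, ?_, ?_⟩
  · rw [← div_lt_iff₀ hRc]; linarith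
  · rw [← lt_div_iff₀' hX]; linarith

noncomputable def controlReproductionNumber (β a b c d p B1 B2 : ℝ) : ℝ :=
  a * β / (c + d) + p * c * β / ((c + d) * B1) + b * β * c * (1 - p) / ((c + d) * B2)

theorem mul_controlReproductionNumber {β a b c d p B1 B2 : ℝ} (hcd : c + d ≠ 0) :
    (c + d) * controlReproductionNumber β a b c d p B1 B2 =
      β * (a + p * c / B1 + b * ((1 - p) * c) / B2) := by
  unfold controlReproductionNumber
  simp only [mul_add, mul_div_assoc', mul_div_mul_left _ _ hcd, mul_div_cancel_left₀ _ hcd]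
  ring

theorem hasDerivAt_total_population {S E I A Q R N : ℝ → ℝ}
    {lam β a b c d q1 q2 r1 r2 r3 p t : ℝ}
    (hN : ∀ t, N t = S t + E t + I t + A t + Q t + R t)
    (hS : HasDerivAt S (lam - β * S t * (a * E t + I t + b * A t) / N t - d * S t) t)
    (hE : HasDerivAt E (β * S t * (a * E t + I t + b * A t) / N t - (c + d) * E t) t)
    (hI : HasDerivAt I (p * c * E t - (q1 + r1 + d) * I t) t)
    (hA : HasDerivAt A ((1 - p) * c * E t - (q2 + r2 + d) * A t) t)
    (hQ : HasDerivAt Q (q1 * I t + q2 * A t - (r3 + d) * Q t) t)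
    (hR : HasDerivAt R (r1 * I t + r2 * A t + r3 * Q t - d * R t) t) :
    HasDerivAt N (lam - d * N t) t := by
  rw [hN t, funext hN]
  exact (((((hS.add hE).add hI).add hA).add hQ).add hR).congr_deriv (by ring)

/-- The model with `Q` and `R` absorbed into the total population `N`, which obeys
`N' = λ - d N`. -/
structure ReducedSolution (lam β a b c d p B1 B2 : ℝ) (S E I A N : ℝ → ℝ) : Prop where
  hasDerivAt_S : ∀ t, 0 ≤ t →
    HasDerivAt S (lam - β * S t * (a * E t + I t + b * A t) / N t - d * S t) t
  hasDerivAt_E : ∀ t, 0 ≤ t →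
    HasDerivAt E (β * S t * (a * E t + I t + b * A t) / N t - (c + d) * E t) t
  hasDerivAt_I : ∀ t, 0 ≤ t → HasDerivAt I (p * c * E t - B1 * I t) t
  hasDerivAt_A : ∀ t, 0 ≤ t → HasDerivAt A ((1 - p) * c * E t - B2 * A t) t
  hasDerivAt_N : ∀ t, 0 ≤ t → HasDerivAt N (lam - d * N t) t
  S_nonneg : ∀ t, 0 ≤ t → 0 ≤ S t
  E_nonneg : ∀ t, 0 ≤ t → 0 ≤ E t
  I_nonneg : ∀ t, 0 ≤ t → 0 ≤ I t
  A_nonneg : ∀ t, 0 ≤ t → 0 ≤ A t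
  N_pos : ∀ t, 0 ≤ t → 0 < N t

namespace ReducedSolution

variable {lam β a b c d p B1 B2 : ℝ} {S E I A N : ℝ → ℝ}

theorem force_nonneg (h : ReducedSolution lam β a b c d p B1 B2 S E I A N) (ha : 0 ≤ a)
    (hb : 0 ≤ b) {t : ℝ} (ht : 0 ≤ t) : 0 ≤ a * E t + I t + b * A t := by
  have := h.E_nonneg t ht; have := h.I_nonneg t ht; have := h.A_nonneg t ht
  positivity

theorem E_pos (h : ReducedSolution lam β a b c d p B1 B2 S E I A N) (hβ : 0 ≤ β) (ha : 0 ≤ a)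
    (hb : 0 ≤ b) (hE0 : 0 < E 0) {t : ℝ} (ht : 0 ≤ t) : 0 < E t := by
  have hdecay := add_mul_exp_le_of_le_hasDerivAt (μ := c + d) (K := 0) h.hasDerivAt_E
    (fun t ht => by
      have := h.S_nonneg t ht; have := h.force_nonneg ha hb ht; have := h.N_pos t ht
      have : 0 ≤ β * S t * (a * E t + I t + b * A t) / N t := by positivity
      linarith) t ht
  simp only [sub_zero, zero_add] at hdecay
  exact (mul_pos hE0 (exp_pos _)).trans_le hdecay

theorem eventually_N_le (h : ReducedSolution lam β a b c d p B1 B2 S E I A N) (hd : 0 < d) :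
    ∀ᶠ t in atTop, N t ≤ lam / d + 1 :=
  eventually_le_add_of_hasDerivAt_le_mul_sub hd one_pos
    ((eventually_ge_atTop 0).mono h.hasDerivAt_N)
    (Eventually.of_forall fun t => by rw [mul_sub, mul_div_cancel₀ _ hd.ne'])

theorem hasDerivAt_S_div_N (h : ReducedSolution lam β a b c d p B1 B2 S E I A N) {t : ℝ}
    (ht : 0 ≤ t) : HasDerivAt (fun t => S t / N t)
      ((lam * (1 - S t / N t) - β * (S t / N t) * (a * E t + I t + b * A t)) / N t) t := by
  have hN := (h.N_pos t ht).ne'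
  exact ((h.hasDerivAt_S t ht).div (h.hasDerivAt_N t ht) hN).congr_deriv (by field_simp; ring)

theorem eventually_le_S_div_N (h : ReducedSolution lam β a b c d p B1 B2 S E I A N)
    (hlam : 0 ≤ lam) (hβ : 0 ≤ β) (ha : 0 ≤ a) (hb : 0 ≤ b) (hd : 0 < d) {F σ : ℝ}
    (hF : ∀ᶠ t in atTop, a * E t + I t + b * A t ≤ F) (hσ : (lam + β * F) * σ < lam) :
    ∀ᶠ t in atTop, σ ≤ S t / N t := by
  have hNmax : 0 < lam / d + 1 := by positivity
  refine eventually_le_of_hasDerivAt_ge_below (div_pos (sub_pos.mpr hσ) hNmax)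
    ((eventually_ge_atTop 0).mono fun t ht => h.hasDerivAt_S_div_N ht) ?_
  filter_upwards [eventually_ge_atTop 0, hF, h.eventually_N_le hd] with t ht hFt hNt hxσ
  have hN := h.N_pos t ht
  have hx : 0 ≤ S t / N t := div_nonneg (h.S_nonneg t ht) hN.le
  have hforce := h.force_nonneg ha hb ht
  have hnum : lam - (lam + β * F) * σ ≤
      lam * (1 - S t / N t) - β * (S t / N t) * (a * E t + I t + b * A t) := by
    have h1 : β * (S t / N t) * (a * E t + I t + b * A t) ≤ β * (S t / N t) * F :=
      mul_le_mul_of_nonneg_left hFt (by positivity)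
    have h2 : (lam + β * F) * (S t / N t) ≤ (lam + β * F) * σ :=
      mul_le_mul_of_nonneg_left hxσ (by nlinarith)
    linarith
  calc (lam - (lam + β * F) * σ) / (lam / d + 1)
      ≤ (lam - (lam + β * F) * σ) / N t :=
        div_le_div_of_nonneg_left (sub_pos.mpr hσ).le hN hNt
    _ ≤ _ := div_le_div_of_nonneg_right hnum hN.le

theorem exists_tendsto_weighted_sum_atTop (h : ReducedSolution lam β a b c d p B1 B2 S E I A N)
    (hβ : 0 ≤ β) (ha : 0 ≤ a) (hb : 0 ≤ b) (hB1 : 0 < B1) (hB2 : 0 < B2) (hE0 : 0 < E 0)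
    {σ : ℝ} (hσ0 : 0 ≤ σ) (hσ : ∀ᶠ t in atTop, σ ≤ S t / N t)
    (hR : c + d < σ * β * (a + p * c / B1 + b * ((1 - p) * c) / B2)) :
    ∃ α γ : ℝ, 0 ≤ α ∧ 0 ≤ γ ∧ Tendsto (fun t => E t + α * I t + γ * A t) atTop atTop := by
  -- Perturbing the weights `σβ/B1`, `σbβ/B2` of the critical Lyapunov function to
  -- `σβ/(B1 + κ)`, `σbβ/(B2 + κ)` leaves room for a growth rate `κ > 0`.
  set g : ℝ → ℝ := fun κ => σ * β * (a + p * c / (B1 + κ) + b * ((1 - p) * c) / (B2 + κ)) - (c + d)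
  have hg : ContinuousAt g 0 := by
    fun_prop (disch := simp [hB1.ne', hB2.ne'])
  obtain ⟨κ, hκ, hκg⟩ := exists_pos_lt_of_continuousAt hg (by simp [g]; linarith)
  set α := σ * β / (B1 + κ)
  set γ := σ * b * β / (B2 + κ)
  have hα : α * (B1 + κ) = σ * β := div_mul_cancel₀ _ (by positivity)
  have hγ : γ * (B2 + κ) = σ * b * β := div_mul_cancel₀ _ (by positivity)
  have hgκ : g κ = σ * β * a - (c + d) + α * (p * c) + γ * ((1 - p) * c) := by
    simp only [g, α, γ]; field_simp; ring
  have hα0 : 0 ≤ α := by positivity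
  have hγ0 : 0 ≤ γ := by positivity
  clear_value α γ
  refine ⟨α, γ, hα0, hγ0, tendsto_atTop_of_hasDerivAt_ge_mul hκ
    ((eventually_ge_atTop 0).mono fun t ht => ((h.hasDerivAt_E t ht).add
      ((h.hasDerivAt_I t ht).const_mul α)).add ((h.hasDerivAt_A t ht).const_mul γ)) ?_ ?_⟩
  · filter_upwards [eventually_ge_atTop 0, hσ] with t ht hσt
    have hforce := h.force_nonneg ha hb ht
    have hflux : σ * β * (a * E t + I t + b * A t) ≤ β * S t * (a * E t + I t + b * A t) / N t := by
      rw [mul_div_right_comm, mul_div_assoc, mul_comm σ β]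
      exact mul_le_mul_of_nonneg_right (mul_le_mul_of_nonneg_left hσt hβ) hforce
    have hgap : σ * β * (a * E t + I t + b * A t) - (c + d) * E t + α * (p * c * E t - B1 * I t)
        + γ * ((1 - p) * c * E t - B2 * A t) - κ * (E t + α * I t + γ * A t)
        = E t * (g κ - κ) := by
      rw [hgκ]; linear_combination -I t * hα - A t * hγ
    nlinarith [h.E_nonneg t ht]
  · filter_upwards [eventually_ge_atTop 0] with t ht
    have := h.I_nonneg t ht; have := h.A_nonneg t ht; have := h.E_pos hβ ha hb hE0 ht
    positivity

theorem eventually_force_le (h : ReducedSolution lam β a b c d p B1 B2 S E I A N) (hβ : 0 < β)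
    (ha : 0 ≤ a) (hb : 0 ≤ b) (hc : 0 ≤ c) (hp : 0 ≤ p) (hp1 : p ≤ 1) (hB1 : 0 < B1)
    (hB2 : 0 < B2) {M L : ℝ} (hE : ∀ᶠ t in atTop, E t ≤ M)
    (hL : β * (a + p * c / B1 + b * ((1 - p) * c) / B2) * M < L) :
    ∃ F, β * F < L ∧ ∀ᶠ t in atTop, a * E t + I t + b * A t ≤ F := by
  set ε := (L - β * (a + p * c / B1 + b * ((1 - p) * c) / B2) * M) / (2 * β * (1 + b))
  have hε : 0 < ε := div_pos (by linarith) (by positivity)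
  have hβε : 2 * (β * (1 + b) * ε) = L - β * (a + p * c / B1 + b * ((1 - p) * c) / B2) * M := by
    simp only [ε]; field_simp
  refine ⟨a * M + (p * c * M / B1 + ε) + b * ((1 - p) * c * M / B2 + ε), ?_, ?_⟩
  · linarith [show β * (a * M + (p * c * M / B1 + ε) + b * ((1 - p) * c * M / B2 + ε)) =
      β * (a + p * c / B1 + b * ((1 - p) * c) / B2) * M + β * (1 + b) * ε by ring]
  filter_upwards [hE, eventually_le_of_hasDerivAt_eq_mul_sub_mul (mul_nonneg hp hc) hB1 hε
      ((eventually_ge_atTop 0).mono h.hasDerivAt_I) hE,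
    eventually_le_of_hasDerivAt_eq_mul_sub_mul (mul_nonneg (sub_nonneg.mpr hp1) hc) hB2 hε
      ((eventually_ge_atTop 0).mono h.hasDerivAt_A) hE] with t hEt hIt hAt
  have := mul_le_mul_of_nonneg_left hEt ha; have := mul_le_mul_of_nonneg_left hAt hb
  linarith

theorem frequently_lt_E (h : ReducedSolution lam β a b c d p B1 B2 S E I A N) (hlam : 0 < lam)
    (hβ : 0 < β) (ha : 0 ≤ a) (hb : 0 ≤ b) (hc : 0 ≤ c) (hd : 0 < d) (hp : 0 ≤ p) (hp1 : p ≤ 1)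
    (hB1 : 0 < B1) (hB2 : 0 < B2) (hE0 : 0 < E 0)
    (hRc : 1 < controlReproductionNumber β a b c d p B1 B2) {M : ℝ}
    (hM : M < lam * (controlReproductionNumber β a b c d p B1 B2 - 1) /
      ((c + d) * controlReproductionNumber β a b c d p B1 B2)) :
    ∃ᶠ t in atTop, M < E t := by
  set Rc := controlReproductionNumber β a b c d p B1 B2
  by_contra! hE
  have hcd : 0 < c + d := by linarith
  have hRc' : (c + d) * Rc = β * (a + p * c / B1 + b * ((1 - p) * c) / B2) :=
    mul_controlReproductionNumber hcd.ne'
  obtain ⟨F, hβF, hF⟩ := h.eventually_force_le hβ ha hb hc hp hp1 hB1 hB2 hE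
    (L := lam * (Rc - 1)) (by rw [← hRc']; rwa [lt_div_iff₀ (by positivity), mul_comm] at hM)
  have hF0 : 0 ≤ F := by
    obtain ⟨t, ht, hFt⟩ := ((eventually_ge_atTop 0).and hF).exists
    exact (h.force_nonneg ha hb ht).trans hFt
  -- `1 < σ Rc` makes the infected subsystem supercritical once `S / N ≥ σ`, and
  -- `(λ + β F) σ < λ` is what lets `S / N` climb above `σ`.
  obtain ⟨σ, hσ0, hσRc, hσ⟩ := exists_one_lt_mul_and_mul_lt (X := lam + β * F)
    (lam := lam) (Rc := Rc) (by positivity) (by positivity) (by linarith)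
  obtain ⟨α, γ, hα, hγ, hV⟩ := h.exists_tendsto_weighted_sum_atTop hβ.le ha hb hB1 hB2 hE0
    hσ0.le (h.eventually_le_S_div_N hlam.le hβ.le ha hb hd hF hσ)
    (by rw [mul_assoc, ← hRc']; nlinarith)
  obtain ⟨t, hVt, hEt, hIt, hAt⟩ := ((hV.eventually_gt_atTop
    (M + α * (p * c * M / B1 + 1) + γ * ((1 - p) * c * M / B2 + 1))).and
    (hE.and ((eventually_le_of_hasDerivAt_eq_mul_sub_mul (mul_nonneg hp hc) hB1 one_pos
      ((eventually_ge_atTop 0).mono h.hasDerivAt_I) hE).and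
    (eventually_le_of_hasDerivAt_eq_mul_sub_mul (mul_nonneg (sub_nonneg.mpr hp1) hc) hB2 one_pos
      ((eventually_ge_atTop 0).mono h.hasDerivAt_A) hE)))).exists
  nlinarith [mul_le_mul_of_nonneg_left hIt hα, mul_le_mul_of_nonneg_left hAt hγ]

end ReducedSolution

theorem exists_times_E_exceeds_theta_Estar_general
    (lam β a b c d q1 q2 r1 r2 r3 p B1 B2 Rc Estar θ : ℝ)
    (S E I A Q R N : ℝ → ℝ)
    (hlam : 0 < lam) (hβ : 0 < β) (ha : 0 < a) (hb : 0 < b) (hc : 0 < c)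
    (hd : 0 < d) (hq1 : 0 < q1) (hq2 : 0 < q2) (hr1 : 0 < r1) (hr2 : 0 < r2)
    (hp : 0 < p) (hp1 : p < 1)
    (hB1 : B1 = q1 + r1 + d) (hB2 : B2 = q2 + r2 + d)
    (hRc : Rc = a * β / (c + d) + p * c * β / ((c + d) * B1)
      + b * β * c * (1 - p) / ((c + d) * B2))
    (hRc1 : 1 < Rc)
    (hθ1 : θ < 1)
    (hEstar : Estar = lam * (Rc - 1) / ((c + d) * Rc))
    (hN : ∀ t, N t = S t + E t + I t + A t + Q t + R t)
    (hS' : ∀ t, 0 ≤ t →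
      HasDerivAt S (lam - β * S t * (a * E t + I t + b * A t) / N t - d * S t) t)
    (hE' : ∀ t, 0 ≤ t →
      HasDerivAt E (β * S t * (a * E t + I t + b * A t) / N t - (c + d) * E t) t)
    (hI' : ∀ t, 0 ≤ t → HasDerivAt I (p * c * E t - B1 * I t) t)
    (hA' : ∀ t, 0 ≤ t → HasDerivAt A ((1 - p) * c * E t - B2 * A t) t)
    (hQ' : ∀ t, 0 ≤ t → HasDerivAt Q (q1 * I t + q2 * A t - (r3 + d) * Q t) t)
    (hR' : ∀ t, 0 ≤ t → HasDerivAt R (r1 * I t + r2 * A t + r3 * Q t - d * R t) t)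
    (hnonneg : ∀ t, 0 ≤ t →
      0 ≤ S t ∧ 0 ≤ E t ∧ 0 ≤ I t ∧ 0 ≤ A t ∧ 0 ≤ Q t ∧ 0 ≤ R t)
    (hE0 : 0 < E 0)
    (hNpos : ∀ t, 0 ≤ t → 0 < N t) :
    ∃ tseq : ℕ → ℝ, Filter.Tendsto tseq Filter.atTop Filter.atTop ∧
      ∀ n : ℕ, 1 ≤ n → θ * Estar < E (tseq n) := by
  subst hB1 hB2
  have hRc' : Rc = controlReproductionNumber β a b c d p (q1 + r1 + d) (q2 + r2 + d) := hRc
  subst hRc'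
  have sol : ReducedSolution lam β a b c d p (q1 + r1 + d) (q2 + r2 + d) S E I A N :=
    { hasDerivAt_S := hS', hasDerivAt_E := hE', hasDerivAt_I := hI', hasDerivAt_A := hA'
      hasDerivAt_N := fun t ht => hasDerivAt_total_population hN (hS' t ht) (hE' t ht) (hI' t ht)
        (hA' t ht) (hQ' t ht) (hR' t ht)
      S_nonneg := fun t ht => (hnonneg t ht).1
      E_nonneg := fun t ht => (hnonneg t ht).2.1
      I_nonneg := fun t ht => (hnonneg t ht).2.2.1
      A_nonneg := fun t ht => (hnonneg t ht).2.2.2.1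
      N_pos := hNpos }
  have hEstar_pos : 0 < Estar := by
    rw [hEstar]; exact div_pos (mul_pos hlam (by linarith)) (by positivity)
  have hfreq : ∃ᶠ t in atTop, θ * Estar < E t :=
    sol.frequently_lt_E hlam hβ ha.le hb.le hc.le hd hp.le hp1.le (by positivity) (by positivity)
      hE0 hRc1 (by rw [← hEstar]; nlinarith)
  obtain ⟨tseq, htend, hlt⟩ := exists_seq_forall_of_frequently hfreq
  exact ⟨tseq, htend, fun n _ => hlt n⟩

theorem exists_times_E_exceeds_theta_Estar
    (lam β a b c d q1 q2 r1 r2 r3 p B1 B2 Rc Estar θ : ℝ)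
    (S E I A Q R N : ℝ → ℝ)
    (hlam : 0 < lam) (hβ : 0 < β) (ha : 0 < a) (hb : 0 < b) (hc : 0 < c)
    (hd : 0 < d) (hq1 : 0 < q1) (hq2 : 0 < q2) (hr1 : 0 < r1) (hr2 : 0 < r2)
    (hr3 : 0 < r3) (hp : 0 < p) (hp1 : p < 1)
    (hB1 : B1 = q1 + r1 + d) (hB2 : B2 = q2 + r2 + d)
    (hRc : Rc = a * β / (c + d) + p * c * β / ((c + d) * B1)
      + b * β * c * (1 - p) / ((c + d) * B2))
    (hRc1 : 1 < Rc)
    (hθ0 : 0 < θ) (hθ1 : θ < 1)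
    (hEstar : Estar = lam * (Rc - 1) / ((c + d) * Rc))
    (hN : ∀ t, N t = S t + E t + I t + A t + Q t + R t)
    (hS' : ∀ t, 0 ≤ t →
      HasDerivAt S (lam - β * S t * (a * E t + I t + b * A t) / N t - d * S t) t)
    (hE' : ∀ t, 0 ≤ t →
      HasDerivAt E (β * S t * (a * E t + I t + b * A t) / N t - (c + d) * E t) t)
    (hI' : ∀ t, 0 ≤ t → HasDerivAt I (p * c * E t - B1 * I t) t)
    (hA' : ∀ t, 0 ≤ t → HasDerivAt A ((1 - p) * c * E t - B2 * A t) t)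
    (hQ' : ∀ t, 0 ≤ t → HasDerivAt Q (q1 * I t + q2 * A t - (r3 + d) * Q t) t)
    (hR' : ∀ t, 0 ≤ t → HasDerivAt R (r1 * I t + r2 * A t + r3 * Q t - d * R t) t)
    (hnonneg : ∀ t, 0 ≤ t →
      0 ≤ S t ∧ 0 ≤ E t ∧ 0 ≤ I t ∧ 0 ≤ A t ∧ 0 ≤ Q t ∧ 0 ≤ R t)
    (hE0 : 0 < E 0)
    (hNpos : ∀ t, 0 ≤ t → 0 < N t) :
    ∃ tseq : ℕ → ℝ, Filter.Tendsto tseq Filter.atTop Filter.atTop ∧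
      ∀ n : ℕ, 1 ≤ n → θ * Estar < E (tseq n) :=
  exists_times_E_exceeds_theta_Estar_general lam β a b c d q1 q2 r1 r2 r3 p B1 B2 Rc Estar θ S E I A
    Q R N hlam hβ ha hb hc hd hq1 hq2 hr1 hr2 hp hp1 hB1 hB2 hRc hRc1 hθ1 hEstar hN hS' hE' hI' hA'
    hQ' hR' hnonneg hE0 hNpos
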